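/- arXiv:2501.01692 — 4 statements merged into one kernel-verified Lean document; each statement's English description precedes it below -/
import Mathlib

section
/- For 1 ≤ d ≤ m(q-1), the minimum distance formulas satisfy wt(RM_{d-1}(m)) ≥ wt(RM_d(m)) + wt(PRM_d(m-1)), where wt(RM_e(j)) = (q-μ)q^{j-ν-1} for e = ν(q-1)+μ, 0 ≤ μ < q-1, and wt(PRM_d(m-1)) = (q-μ')q^{m-1-ν'-1} for d-1 = ν'(q-1)+μ', 0 ≤ μ' < q-1 (with the convention that these weights equal 1 when the exponent expressions degenerate at maximal degree). -/
/-- Minimum distance of the affine Reed-Muller code `RM_e(j)`: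
`(q-μ)q^{j-ν-1}` where `e = ν(q-1)+μ`, `0 ≤ μ < q-1` (with the convention that the
weight equals `1` at maximal degree `e = j(q-1)`; this closed form covers all
`0 ≤ e ≤ j(q-1)`). -/
def wtRM (q e j : ℕ) : ℕ :=
  if e = 0 then q ^ j
  else (q - 1 - (e - 1) % (q - 1)) * q ^ (j - 1 - (e - 1) / (q - 1))

/-- For `1 ≤ d ≤ (m-1)(q-1)`,
`wt(RM_{d-1}(m)) ≥ wt(RM_d(m)) + wt(PRM_d(m-1))`, where
`wt(PRM_d(m-1)) = wt(RM_{d-1}(m-1))`. -/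
theorem stmt_7 (q m d : ℕ) (hq : IsPrimePow q) (hm : 2 ≤ m)
    (hd1 : 1 ≤ d) (hd2 : d ≤ (m - 1) * (q - 1)) :
    wtRM q (d - 1) m ≥ wtRM q d m + wtRM q (d - 1) (m - 1) := by
  have hq2 : 2 ≤ q := hq.two_le
  rcases Nat.lt_or_ge d 2 with hd | hd
  · -- d = 1
    have hd' : d = 1 := by omega
    subst hd'
    have w1 : wtRM q (1 - 1) m = q ^ m := by norm_num [wtRM]
    have w2 : wtRM q 1 m = (q - 1) * q ^ (m - 1) := by norm_num [wtRM]
    have w3 : wtRM q (1 - 1) (m - 1) = q ^ (m - 1) := by norm_num [wtRM]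
    rw [w1, w2, w3]
    have key : (q - 1) * q ^ (m - 1) + q ^ (m - 1) = q * q ^ (m - 1) := by
      have h1 : q - 1 + 1 = q := by omega
      calc (q - 1) * q ^ (m - 1) + q ^ (m - 1) = (q - 1 + 1) * q ^ (m - 1) := by ring
        _ = q * q ^ (m - 1) := by rw [h1]
    have hm1 : m = (m - 1) + 1 := by omega
    rw [key]
    conv_lhs => rw [hm1]
    rw [pow_succ, mul_comm]
  · -- d ≥ 2
    have hq1 : 0 < q - 1 := by omega
    set a := d - 2 with ha
    set v := a / (q - 1) with hv
    set r := a % (q - 1) with hr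
    have hrlt : r < q - 1 := Nat.mod_lt _ hq1
    have hdm : (q - 1) * v + r = a := Nat.div_add_mod a (q - 1)
    have hvm : v ≤ m - 2 := by
      have h2 : a < (m - 1) * (q - 1) := by omega
      have h3 : (q - 1) * v < (q - 1) * (m - 1) := by
        calc (q - 1) * v ≤ a := by omega
        _ < (m - 1) * (q - 1) := h2
        _ = (q - 1) * (m - 1) := by ring
      have := Nat.lt_of_mul_lt_mul_left h3
      omega
    have e1 : d - 1 - 1 = a := by omega
    have e2 : d - 1 = a + 1 := by omega
    have w1 : wtRM q (d - 1) m = (q - 1 - r) * q ^ (m - 1 - v) := by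
      rw [wtRM, if_neg (by omega : d - 1 ≠ 0), e1, ← hr, ← hv]
    have w3 : wtRM q (d - 1) (m - 1) = (q - 1 - r) * q ^ (m - 1 - 1 - v) := by
      rw [wtRM, if_neg (by omega : d - 1 ≠ 0), e1, ← hr, ← hv]
    have w2 : wtRM q d m
        = (q - 1 - (a + 1) % (q - 1)) * q ^ (m - 1 - (a + 1) / (q - 1)) := by
      rw [wtRM, if_neg (by omega : d ≠ 0), e2]
    rw [w1, w2, w3]
    rcases Nat.lt_or_ge (r + 1) (q - 1) with hc | hc
    · -- non-boundary case
      obtain ⟨hdiv, hmod⟩ := (Nat.div_mod_unique hq1).mpr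
        (⟨by omega, hc⟩ : (r + 1) + (q - 1) * v = a + 1 ∧ r + 1 < q - 1)
      rw [hdiv, hmod]
      have hexp : m - 1 - v = (m - 1 - 1 - v) + 1 := by omega
      rw [hexp, pow_succ]
      set x := q ^ (m - 1 - 1 - v) with hx
      set t := q - 1 - (r + 1) with hts
      have ht1 : q - 1 - r = t + 1 := by omega
      have ht2 : t + 1 ≤ q := by omega
      rw [ht1]
      have hb : (t + 1) * x ≤ x * q := by
        calc (t + 1) * x ≤ q * x := Nat.mul_le_mul_right x ht2
          _ = x * q := Nat.mul_comm q x
      nlinarith [hb]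
    · -- boundary case: q - 1 divides a + 1
      have hc' : r + 1 = q - 1 := by omega
      have heq : a + 1 = (q - 1) * (v + 1) := by rw [Nat.mul_add, Nat.mul_one]; omega
      have hdiv : (a + 1) / (q - 1) = v + 1 := by
        rw [heq, Nat.mul_div_cancel_left _ hq1]
      have hmod : (a + 1) % (q - 1) = 0 := by rw [heq, Nat.mul_mod_right]
      rw [hdiv, hmod]
      have hr1 : q - 1 - r = 1 := by omega
      rw [hr1, Nat.sub_zero]
      have hexp1 : m - 1 - (v + 1) = m - 1 - 1 - v := by omega
      have hexp2 : m - 1 - v = (m - 1 - 1 - v) + 1 := by omega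
      rw [hexp1, hexp2, pow_succ]
      set x := q ^ (m - 1 - 1 - v) with hx
      have key : (q - 1) * x + 1 * x = q * x := by
        have h1 : q - 1 + 1 = q := by omega
        calc (q - 1) * x + 1 * x = (q - 1 + 1) * x := by ring
          _ = q * x := by rw [h1]
      rw [key, one_mul, mul_comm]
end

section
/- For 1 ≤ d ≤ m(q-1) and ξ a primitive element of F_q, the projective Reed-Muller code satisfies the recursive construction PRM_d(m) = { (u + v_{ξ,d}, v) : u ∈ RM_{d-1}(m), v ∈ PRM_d(m-1) }, where for v ∈ F_q^{p_{m-1}}, v_{ξ,d} := (v, ξ^d v, ξ^{2d} v, ..., ξ^{(q-2)d} v, 0) ∈ F_q^{q^m}, using the orderings of P^m and F_q^m induced recursively by the ordering F_q = {ξ^0, ξ^1, ..., ξ^{q-2}, 0}. -/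
open MvPolynomial

/-- `stdRep F n` is the set of standard representatives of points of projective
`n`-space over `F`: vectors in `F^{n+1}` whose leftmost nonzero coordinate is `1`. -/
def stdRep (F : Type*) [Field F] (n : ℕ) : Set (Fin (n + 1) → F) :=
  {v | ∃ i : Fin (n + 1), v i = 1 ∧ ∀ k < i, v k = 0}

section Aux
variable {F : Type*} [Field F] {m : ℕ}

lemma myaeval_eq_eval {σ : Type*} (x : σ → F) (p : MvPolynomial σ F) :
    aeval x p = eval x p := by
  rw [aeval_def, Algebra.algebraMap_self]; rfl

lemma degree_eq_sum_univ {σ : Type*} [Fintype σ] (α : σ →₀ ℕ) :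
    α.degree = ∑ i, α i :=
  Finset.sum_subset (Finset.subset_univ _) fun i _ hi =>
    Finsupp.notMem_support_iff.mp hi

lemma eval_bind₁_cons (t : F) (x : Fin (m + 1) → F) (f : MvPolynomial (Fin (m + 2)) F) :
    eval x (bind₁ (Fin.cons (C t) X) f) = eval (Fin.cons t x) f := by
  rw [← myaeval_eq_eval, aeval_bind₁, ← myaeval_eq_eval]
  have hfun : (fun i => (aeval x) ((Fin.cons (C t) X : Fin (m + 2) → MvPolynomial (Fin (m + 1)) F) i)) = Fin.cons t x := by
    funext i
    refine Fin.cases ?_ (fun j => ?_) i <;> simp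
  rw [hfun]

lemma eval_smul_of_isHomogeneous {σ : Type*} [Fintype σ] {n : ℕ}
    {p : MvPolynomial σ F} (hp : p.IsHomogeneous n) (a : F) (x : σ → F) :
    eval (a • x) p = a ^ n * eval x p := by
  rw [eval_eq', eval_eq', Finset.mul_sum]
  refine Finset.sum_congr rfl fun α hα => ?_
  have hdeg : α.degree = n := by
    rw [Finsupp.degree_eq_weight_one]
    exact hp (mem_support_iff.mp hα)
  have : ∏ i, (a • x) i ^ α i = a ^ n * ∏ i, x i ^ α i := by
    simp only [Pi.smul_apply, smul_eq_mul, mul_pow]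
    rw [Finset.prod_mul_distrib, Finset.prod_pow_eq_pow_sum, ← degree_eq_sum_univ, hdeg]
  rw [this]; ring

lemma eval_zero_of_isHomogeneous {σ : Type*} [Fintype σ] {n : ℕ}
    {p : MvPolynomial σ F} (hp : p.IsHomogeneous n) (hn : 1 ≤ n) :
    eval (0 : σ → F) p = 0 := by
  rw [eval_eq']
  refine Finset.sum_eq_zero fun α hα => ?_
  have hdeg : α.degree = n := by
    rw [Finsupp.degree_eq_weight_one]; exact hp (mem_support_iff.mp hα)
  have : α ≠ 0 := by
    rintro rfl
    simp [Finsupp.degree] at hdeg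
    omega
  obtain ⟨i, hi⟩ := Finsupp.ne_iff.mp this
  have hi' : α i ≠ 0 := by simpa using hi
  rw [Finset.prod_eq_zero (Finset.mem_univ i) (by rw [Pi.zero_apply]; exact zero_pow hi'), mul_zero]

lemma cons_zero_mem_stdRep {y : Fin (m + 1) → F} (hy : y ∈ stdRep F m) :
    (Fin.cons 0 y : Fin (m + 2) → F) ∈ stdRep F (m + 1) := by
  obtain ⟨i, h1, h0⟩ := hy
  refine ⟨i.succ, by simp [h1], fun k hk => ?_⟩
  rcases Fin.eq_zero_or_eq_succ k with rfl | ⟨j, rfl⟩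
  · simp
  · rw [Fin.cons_succ]
    exact h0 j (by simpa using hk)

lemma cons_one_mem_stdRep (x : Fin (m + 1) → F) :
    (Fin.cons 1 x : Fin (m + 2) → F) ∈ stdRep F (m + 1) :=
  ⟨0, by simp, fun k hk => absurd hk (Fin.not_lt_zero k)⟩

lemma stdRep_cases {w : Fin (m + 2) → F} (hw : w ∈ stdRep F (m + 1)) :
    w 0 = 1 ∨ (w 0 = 0 ∧ Fin.tail w ∈ stdRep F m) := by
  obtain ⟨i, h1, h0⟩ := hw
  rcases Fin.eq_zero_or_eq_succ i with rfl | ⟨j, rfl⟩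
  · exact Or.inl h1
  · exact Or.inr ⟨h0 0 (Fin.succ_pos j), j, h1,
      fun k hk => h0 k.succ (by simpa using hk)⟩

lemma exists_smul_stdRep {ξ : F} [Fintype F]
    (hξ : ∀ a : F, a ≠ 0 → ∃ r < Fintype.card F - 1, ξ ^ r = a)
    {x : Fin (m + 1) → F} (hx : x ≠ 0) :
    ∃ r < Fintype.card F - 1, ∃ y ∈ stdRep F m, x = ξ ^ r • y := by
  classical
  obtain ⟨i, hi, hmin⟩ : ∃ i, x i ≠ 0 ∧ ∀ k < i, x k = 0 := by
    have hne : (Finset.univ.filter fun j => x j ≠ 0).Nonempty := by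
      obtain ⟨j, hj⟩ := Function.ne_iff.mp hx
      exact ⟨j, Finset.mem_filter.mpr ⟨Finset.mem_univ _, by simpa using hj⟩⟩
    refine ⟨(Finset.univ.filter fun j => x j ≠ 0).min' hne, ?_, fun k hk => ?_⟩
    · have := Finset.min'_mem _ hne
      simpa using this
    · by_contra hxk
      exact absurd (Finset.min'_le _ k (by simp [hxk])) (not_le.mpr hk)
  obtain ⟨r, hr, hra⟩ := hξ (x i) hi
  refine ⟨r, hr, (x i)⁻¹ • x, ⟨i, by simp [inv_mul_cancel₀ hi], fun k hk => ?_⟩, ?_⟩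
  · simp [hmin k hk]
  · rw [hra, smul_smul, mul_inv_cancel₀ hi, one_smul]


lemma bind₁_cons_monomial {F : Type*} [Field F] {m : ℕ}
    (t : MvPolynomial (Fin (m + 1)) F) (β : Fin (m + 2) →₀ ℕ) (a : F) :
    bind₁ (Fin.cons t X) (monomial β a) =
      C a * t ^ (β 0) * ∏ j : Fin (m + 1), X j ^ β j.succ := by
  rw [bind₁_monomial]
  have hext : ∏ i ∈ β.support, (Fin.cons t X : Fin (m + 2) → MvPolynomial (Fin (m + 1)) F) i ^ β i
      = ∏ i : Fin (m + 2), (Fin.cons t X : Fin (m + 2) → MvPolynomial (Fin (m + 1)) F) i ^ β i := by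
    refine Finset.prod_subset (Finset.subset_univ _) fun i _ hi => ?_
    rw [Finsupp.notMem_support_iff.mp hi, pow_zero]
  rw [hext, Fin.prod_univ_succ, Fin.cons_zero, ← mul_assoc]
  simp only [Fin.cons_succ]

end Aux

/-- Recursive construction `PRM_d(m) = {(u + v_{ξ,d}, v) : u ∈ RM_{d-1}(m),
v ∈ PRM_d(m-1)}` (stated with `m+1` in place of `m ≥ 2`): a function `c` on the
standard representatives of `P^{m+1}` is the evaluation of a homogeneous degree-`d`
polynomial iff there are `u ∈ RM_{d-1}(m+1)` (a function on `F_q^{m+1}`) and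
`v ∈ PRM_d(m)` (a function on `P^m`) with `c(0,y) = v(y)` for `y ∈ P^m`,
`c(1,0) = u(0)`, and `c(1, ξ^r·y) = u(ξ^r·y) + ξ^{rd} v(y)` for `0 ≤ r ≤ q-2`,
`y ∈ P^m`; this encodes `v_{ξ,d} = (v, ξ^d v, ..., ξ^{(q-2)d} v, 0)` via the
recursive ordering of the points. -/
theorem stmt_13 (F : Type*) [Field F] [Fintype F] (ξ : F)
    (hξ : ∀ a : F, a ≠ 0 → ∃ r < Fintype.card F - 1, ξ ^ r = a)
    (m d : ℕ) (hm : 1 ≤ m) (hd1 : 1 ≤ d) (hd2 : d ≤ (m + 1) * (Fintype.card F - 1))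
    (c : (Fin (m + 2) → F) → F) :
    (∃ f : MvPolynomial (Fin (m + 2)) F, f.IsHomogeneous d ∧
        ∀ w ∈ stdRep F (m + 1), eval w f = c w) ↔
    (∃ u : (Fin (m + 1) → F) → F,
      (∃ g : MvPolynomial (Fin (m + 1)) F, g.totalDegree ≤ d - 1 ∧
        ∀ x : Fin (m + 1) → F, eval x g = u x) ∧
      ∃ v : {y : Fin (m + 1) → F // y ∈ stdRep F m} → F,
        (∃ h : MvPolynomial (Fin (m + 1)) F, h.IsHomogeneous d ∧
          ∀ y : {y : Fin (m + 1) → F // y ∈ stdRep F m}, eval y.1 h = v y) ∧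
        (∀ y : {y : Fin (m + 1) → F // y ∈ stdRep F m},
          c (Fin.cons 0 y.1 : Fin (m + 2) → F) = v y) ∧
        (c (Fin.cons 1 (0 : Fin (m + 1) → F) : Fin (m + 2) → F) = u 0) ∧
        (∀ r < Fintype.card F - 1,
          ∀ y : {y : Fin (m + 1) → F // y ∈ stdRep F m},
            c (Fin.cons 1 (ξ ^ r • y.1) : Fin (m + 2) → F) =
              u (ξ ^ r • y.1) + ξ ^ (r * d) * v y)) := by
  classical
  constructor
  · rintro ⟨f, hfhom, hf⟩
    refine ⟨fun x => eval (Fin.cons 1 x) f - eval (Fin.cons 0 x) f,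
      ⟨bind₁ (Fin.cons (C 1) X) f - bind₁ (Fin.cons (C 0) X) f, ?_, fun x => by
        rw [map_sub, eval_bind₁_cons, eval_bind₁_cons]⟩,
      fun y => eval (Fin.cons 0 y.1) f,
      ⟨bind₁ (Fin.cons (C 0) X) f, ?_, fun y => eval_bind₁_cons 0 y.1 f⟩,
      fun y => (hf _ (cons_zero_mem_stdRep y.2)).symm, ?_, ?_⟩
    · -- total degree bound
      conv_lhs => rw [f.as_sum, map_sum, map_sum, ← Finset.sum_sub_distrib]
      refine totalDegree_finsetSum_le fun β hβ => ?_
      rw [bind₁_cons_monomial, bind₁_cons_monomial]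
      have hβd : β.degree = d := by
        rw [Finsupp.degree_eq_weight_one]
        exact hfhom (mem_support_iff.mp hβ)
      have hsum : β 0 + ∑ j : Fin (m + 1), β j.succ = d := by
        rw [← hβd, degree_eq_sum_univ]
        exact (Fin.sum_univ_succ fun i => β i).symm
      rcases Nat.eq_zero_or_pos (β 0) with h0 | h0
      · simp [h0]
      · have hne0 : β 0 ≠ 0 := Nat.pos_iff_ne_zero.mp h0
        rw [C_0, zero_pow hne0, mul_zero, zero_mul, sub_zero, C_1, one_pow, mul_one]
        calc (C (coeff β f) * ∏ j : Fin (m + 1), X j ^ β j.succ).totalDegree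
            ≤ (C (coeff β f) : MvPolynomial (Fin (m + 1)) F).totalDegree
              + (∏ j : Fin (m + 1), X j ^ β j.succ).totalDegree := totalDegree_mul _ _
          _ ≤ 0 + ∑ j : Fin (m + 1), (X j ^ β j.succ : MvPolynomial (Fin (m + 1)) F).totalDegree := by
              gcongr
              · exact le_of_eq (totalDegree_C _)
              · exact totalDegree_finset_prod _ _
          _ = ∑ j : Fin (m + 1), β j.succ := by
              rw [zero_add]
              exact Finset.sum_congr rfl fun j _ => totalDegree_X_pow _ _
          _ ≤ d - 1 := by omega
    · -- homogeneity of h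
      have h1 : ∀ i : Fin (m + 2),
          ((Fin.cons (C 0) X : Fin (m + 2) → MvPolynomial (Fin (m + 1)) F) i).IsHomogeneous 1 := by
        intro i
        refine Fin.cases ?_ (fun j => ?_) i
        · rw [Fin.cons_zero, map_zero]
          exact isHomogeneous_zero _ _ _
        · rw [Fin.cons_succ]
          exact isHomogeneous_X _ _
      have := hfhom.aeval _ h1
      rwa [one_mul] at this
    · -- c (1,0) = u 0
      rw [← hf _ (cons_one_mem_stdRep 0)]
      beta_reduce
      have hz : (Fin.cons 0 (0 : Fin (m + 1) → F) : Fin (m + 2) → F) = 0 := by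
        funext i
        refine Fin.cases ?_ (fun j => ?_) i <;> simp
      rw [hz, eval_zero_of_isHomogeneous hfhom hd1, sub_zero]
    · -- scaling equation
      intro r hr y
      rw [← hf _ (cons_one_mem_stdRep _)]
      beta_reduce
      have hc : (Fin.cons 0 (ξ ^ r • y.1) : Fin (m + 2) → F)
          = (ξ ^ r) • (Fin.cons 0 y.1 : Fin (m + 2) → F) := by
        funext i
        refine Fin.cases ?_ (fun j => ?_) i <;> simp
      rw [hc, eval_smul_of_isHomogeneous hfhom, ← pow_mul]
      ring
  · rintro ⟨u, ⟨g, hgdeg, hgu⟩, v, ⟨h, hhom, hhv⟩, hc0, hc10, hcr⟩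
    set G : MvPolynomial (Fin (m + 2)) F :=
      ∑ α ∈ g.support, X 0 ^ (d - α.degree) * rename Fin.succ (monomial α (coeff α g)) with hG
    have hdegle : ∀ α ∈ g.support, α.degree ≤ d - 1 := fun α hα => by
      refine le_trans ?_ hgdeg
      exact le_totalDegree hα
    refine ⟨G + rename Fin.succ h, ?_, ?_⟩
    · refine IsHomogeneous.add (IsHomogeneous.sum _ _ _ fun α hα => ?_) hhom.rename_isHomogeneous
      have hle := hdegle α hα
      have heq : (d - α.degree) + α.degree = d := by omega
      have hmon : (monomial α (coeff α g)).IsHomogeneous α.degree :=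
        isHomogeneous_monomial (coeff α g) rfl
      have hmul := (isHomogeneous_X_pow (0 : Fin (m + 2)) (d - α.degree)).mul
        (hmon.rename_isHomogeneous (f := Fin.succ))
      rwa [heq] at hmul
    · intro w hw
      have hcomp : ∀ (t : F) (x : Fin (m + 1) → F), (Fin.cons t x : Fin (m + 2) → F) ∘ Fin.succ = x := by
        intro t x; funext j; simp [Function.comp]
      have hH : ∀ (t : F) (x : Fin (m + 1) → F),
          eval (Fin.cons t x : Fin (m + 2) → F) (rename Fin.succ h) = eval x h := by
        intro t x; rw [eval_rename, hcomp]
      have hG1 : ∀ x : Fin (m + 1) → F,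
          eval (Fin.cons 1 x : Fin (m + 2) → F) G = eval x g := by
        intro x
        rw [hG, map_sum]
        have hterm : ∀ α ∈ g.support,
            eval (Fin.cons 1 x : Fin (m + 2) → F)
              (X 0 ^ (d - α.degree) * rename Fin.succ (monomial α (coeff α g)))
            = eval x (monomial α (coeff α g)) := by
          intro α hα
          rw [map_mul, map_pow, eval_X, Fin.cons_zero, one_pow, one_mul, eval_rename, hcomp]
        rw [Finset.sum_congr rfl hterm, ← map_sum, ← as_sum]
      have hG0 : ∀ x : Fin (m + 1) → F,
          eval (Fin.cons 0 x : Fin (m + 2) → F) G = 0 := by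
        intro x
        rw [hG, map_sum]
        refine Finset.sum_eq_zero fun α hα => ?_
        rw [map_mul, map_pow, eval_X, Fin.cons_zero]
        have hne : d - α.degree ≠ 0 := by
          have := hdegle α hα
          omega
        rw [zero_pow hne, zero_mul]
      rcases stdRep_cases hw with h1 | ⟨h0, htl⟩
      · -- w 0 = 1
        have hw' : w = Fin.cons 1 (Fin.tail w) := by
          conv_lhs => rw [← Fin.cons_self_tail w]
          rw [h1]
        rw [hw', map_add, hG1, hH, hgu]
        by_cases hx : Fin.tail w = 0
        · rw [hx, eval_zero_of_isHomogeneous hhom hd1, add_zero, hc10]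
        · obtain ⟨r, hr, y, hy, hxeq⟩ := exists_smul_stdRep hξ hx
          rw [hxeq, eval_smul_of_isHomogeneous hhom, hcr r hr ⟨y, hy⟩, ← pow_mul,
            hhv ⟨y, hy⟩]
      · -- w 0 = 0
        have hw' : w = Fin.cons 0 (Fin.tail w) := by
          conv_lhs => rw [← Fin.cons_self_tail w]
          rw [h0]
        rw [hw', map_add, hG0, hH, zero_add, hhv ⟨_, htl⟩, ← hc0 ⟨_, htl⟩]
end

section
/- If d' < d, d' ≡ d (mod q-1), and x^α is a monomial of degree d' in x_{m-j},...,x_m with α_{m-j} > 0, then the monomial x^{α'} = x_{m-j}^{α_{m-j}+λ(q-1)} x_{m-j+1}^{α_{m-j+1}} ··· x_m^{α_m}, where λ = (d-d')/(q-1), is homogeneous of degree d and has the same evaluation as x^α at every standard representative point of P^m. Consequently PRM_{d'}(m) ⊆ PRM_d(m). -/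
open MvPolynomial

/-!
Since `a ^ q = a` on `F_q`, raising any positive exponent of a coordinate by a multiple of
`q - 1` does not change the value of a monomial. A homogeneous polynomial of positive degree
`d'` has a positive exponent in each of its monomials, so padding one such exponent of every
monomial by `d - d'` yields a homogeneous polynomial of degree `d` with the same evaluations.
-/

lemma pow_add_eq_pow_of_pow_succ_eq {M : Type*} [Monoid M] {a : M} {N k : ℕ}
    (ha : a ^ (N + 1) = a) (hk : k ≠ 0) : a ^ (k + N) = a ^ k := by
  obtain ⟨j, rfl⟩ := Nat.exists_eq_succ_of_ne_zero hk
  rw [show j.succ + N = j + (N + 1) by omega, pow_add, ha, pow_succ]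

lemma FiniteField.pow_succ_eq_self_of_card_sub_one_dvd {F : Type*} [Field F] [Fintype F]
    (a : F) {N : ℕ} (hN : Fintype.card F - 1 ∣ N) : a ^ (N + 1) = a := by
  obtain ⟨L, rfl⟩ := hN
  rcases eq_or_ne a 0 with rfl | ha
  · simp
  · rw [pow_succ, pow_mul, FiniteField.pow_card_sub_one_eq_one a ha, one_pow, one_mul]

lemma Finset.prod_pow_update_add_eq {ι M : Type*} [Fintype ι] [DecidableEq ι] [CommMonoid M]
    (w : ι → M) (β : ι → ℕ) {i : ι} (hi : β i ≠ 0) {N : ℕ} (hw : w i ^ (N + 1) = w i) :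
    ∏ k, w k ^ Function.update β i (β i + N) k = ∏ k, w k ^ β k := by
  have hupdate : (fun k => w k ^ Function.update β i (β i + N) k) =
      Function.update (fun k => w k ^ β k) i (w i ^ (β i + N)) :=
    funext fun k => Function.apply_update (fun k e => w k ^ e) β i (β i + N) k
  rw [hupdate, pow_add_eq_pow_of_pow_succ_eq hw hi, Function.update_eq_self]

lemma Finset.sum_update_add {ι : Type*} [Fintype ι] [DecidableEq ι] (α : ι → ℕ) (i : ι)
    (N : ℕ) : ∑ k, Function.update α i (α i + N) k = ∑ k, α k + N := by
  rw [Finset.sum_update_of_mem (Finset.mem_univ i), ← Finset.add_sum_erase _ _ (Finset.mem_univ i),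
    Finset.sdiff_singleton_eq_erase]
  omega

namespace MvPolynomial

variable {σ R : Type*} [CommSemiring R]

lemma eval_monomial_add_single {x : σ → R} {β : σ →₀ ℕ} {i : σ} (hi : β i ≠ 0) {N : ℕ}
    (hx : x i ^ (N + 1) = x i) (c : R) :
    eval x (monomial (β + Finsupp.single i N) c) = eval x (monomial β c) := by
  simp only [eval_monomial]
  rw [Finsupp.prod_add_index' (by simp) (by simp [pow_add]),
    Finsupp.prod_single_index (by simp),
    ← Finsupp.mul_prod_erase β i _ (Finsupp.mem_support_iff.2 hi), mul_right_comm, ← pow_add,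
    pow_add_eq_pow_of_pow_succ_eq hx hi]

lemma exists_isHomogeneous_add_eval_eq {f : MvPolynomial σ R} {n : ℕ} (hf : f.IsHomogeneous n)
    (hn : n ≠ 0) (N : ℕ) (hR : ∀ a : R, a ^ (N + 1) = a) :
    ∃ g : MvPolynomial σ R, g.IsHomogeneous (n + N) ∧ ∀ x, eval x g = eval x f := by
  have hpos : ∀ β ∈ f.support, ∃ i, β i ≠ 0 := by
    intro β hβ
    by_contra! h
    have hβ0 : β = 0 := Finsupp.ext h
    have := hf (mem_support_iff.mp hβ)
    simp [hβ0] at this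
    omega
  choose pick hpick using hpos
  refine ⟨∑ β ∈ f.support.attach,
    monomial (β.1 + Finsupp.single (pick β.1 β.2) N) (coeff β.1 f), ?_, ?_⟩
  · refine IsHomogeneous.sum _ _ _ fun β _ => isHomogeneous_monomial _ ?_
    rw [map_add, Finsupp.degree_single, Finsupp.degree_eq_weight_one]
    exact congrArg (· + N) (hf (mem_support_iff.mp β.2))
  · intro x
    rw [map_sum, eval_eq, ← Finset.sum_attach f.support]
    refine Finset.sum_congr rfl fun β _ => ?_
    rw [eval_monomial_add_single (hpick β.1 β.2) (hR _), eval_monomial]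
    rfl

end MvPolynomial

theorem stmt_14_general (F : Type*) [Field F] [Fintype F] (m d d' : ℕ)
    (hd : d' < d) (hmod : d' ≡ d [MOD Fintype.card F - 1]) (hd' : 1 ≤ d')
    (α : Fin (m + 1) → ℕ) (i₀ : Fin (m + 1))
    (hα : ∑ k, α k = d') (hi₀ : 0 < α i₀) :
    (∑ k, (Function.update α i₀
        (α i₀ + (d - d') / (Fintype.card F - 1) * (Fintype.card F - 1))) k = d) ∧
    (∀ w ∈ stdRep F m,
      ∏ k, w k ^ α k =
        ∏ k, w k ^ (Function.update α i₀
          (α i₀ + (d - d') / (Fintype.card F - 1) * (Fintype.card F - 1))) k) ∧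
    (∀ c : {v : Fin (m + 1) → F // v ∈ stdRep F m} → F,
      (∃ f : MvPolynomial (Fin (m + 1)) F, f.IsHomogeneous d' ∧
          ∀ w : {v : Fin (m + 1) → F // v ∈ stdRep F m}, eval w.1 f = c w) →
      (∃ f : MvPolynomial (Fin (m + 1)) F, f.IsHomogeneous d ∧
          ∀ w : {v : Fin (m + 1) → F // v ∈ stdRep F m}, eval w.1 f = c w)) := by
  have hdvd : Fintype.card F - 1 ∣ d - d' := (Nat.modEq_iff_dvd' hd.le).mp hmod
  rw [Nat.div_mul_cancel hdvd]
  refine ⟨by rw [Finset.sum_update_add, hα]; omega, fun w _ => ?_, ?_⟩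
  · exact (Finset.prod_pow_update_add_eq w α hi₀.ne'
      (FiniteField.pow_succ_eq_self_of_card_sub_one_dvd _ hdvd)).symm
  · rintro c ⟨f, hf, hev⟩
    obtain ⟨g, hg, hgf⟩ := exists_isHomogeneous_add_eval_eq hf (by omega) (d - d')
      fun a => FiniteField.pow_succ_eq_self_of_card_sub_one_dvd a hdvd
    exact ⟨g, by rwa [Nat.add_sub_cancel' hd.le] at hg, fun w => (hgf w.1).trans (hev w)⟩

/-- If `d' < d`, `d' ≡ d (mod q-1)`, and `x^α` is a monomial of degree `d'` in
`x_{m-j},...,x_m` with `α_{m-j} > 0` (here `i₀` is the index of `x_{m-j}`), then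
`x^{α'}` with `α' = α + λ(q-1)·e_{i₀}`, `λ = (d-d')/(q-1)`, is homogeneous of
degree `d` and has the same evaluation as `x^α` at every standard representative
of `P^m`. Consequently `PRM_{d'}(m) ⊆ PRM_d(m)`. -/
theorem stmt_14 (F : Type*) [Field F] [Fintype F] (m d d' : ℕ)
    (hd : d' < d) (hmod : d' ≡ d [MOD Fintype.card F - 1]) (hd' : 1 ≤ d')
    (α : Fin (m + 1) → ℕ) (i₀ : Fin (m + 1))
    (hα : ∑ k, α k = d') (hi₀ : 0 < α i₀) (hleft : ∀ k < i₀, α k = 0) :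
    (∑ k, (Function.update α i₀
        (α i₀ + (d - d') / (Fintype.card F - 1) * (Fintype.card F - 1))) k = d) ∧
    (∀ w ∈ stdRep F m,
      ∏ k, w k ^ α k =
        ∏ k, w k ^ (Function.update α i₀
          (α i₀ + (d - d') / (Fintype.card F - 1) * (Fintype.card F - 1))) k) ∧
    (∀ c : {v : Fin (m + 1) → F // v ∈ stdRep F m} → F,
      (∃ f : MvPolynomial (Fin (m + 1)) F, f.IsHomogeneous d' ∧
          ∀ w : {v : Fin (m + 1) → F // v ∈ stdRep F m}, eval w.1 f = c w) →
      (∃ f : MvPolynomial (Fin (m + 1)) F, f.IsHomogeneous d ∧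
          ∀ w : {v : Fin (m + 1) → F // v ∈ stdRep F m}, eval w.1 f = c w)) :=
  stmt_14_general F m d d' hd hmod hd' α i₀ hα hi₀
end

section
/- Let d ≥ q and let x^α, x^β be two distinct monomials in the standard monomial basis M_d of F_q[x_0,...,x_m]_d / I(P^m), with x^α ∈ M_d(a), x^β ∈ M_d(b), a ≥ b, such that x^α(1,x_1,...,x_m) ≡ x^β(1,x_1,...,x_m) modulo the ideal ⟨x_i^q - x_i : 1 ≤ i ≤ m⟩. Then x_0 divides x^α, x_0 does not divide x^β, and there exists a monomial x^{β'} ∈ M_{d-(q-1)} whose evaluation at every standard representative of P^m equals that of x^β. -/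
/-- `Mmon q m d j α` says the monomial `x^α` belongs to `M_d(j)`: it is a monomial
in `x_{m-j},...,x_m` of total degree `d` with `α_{m-j} > 0` and all other exponents
at most `q-1`. -/
def Mmon (q m d j : ℕ) (α : Fin (m + 1) → ℕ) : Prop :=
  j ≤ m ∧ (∑ k, α k = d) ∧
  0 < α ⟨m - j, Nat.lt_succ_of_le (Nat.sub_le m j)⟩ ∧
  (∀ k : Fin (m + 1), (k : ℕ) < m - j → α k = 0) ∧
  (∀ k : Fin (m + 1), m - j < (k : ℕ) → α k ≤ q - 1)

/-- `redExp q e`: the reduced exponent of `e` modulo `I(A^m) = ⟨x_i^q - x_i⟩`: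
`0` if `e = 0`, else the representative of `e` in `{1,...,q-1}` modulo `q-1`. -/
def redExp (q e : ℕ) : ℕ :=
  if e = 0 then 0 else if e % (q - 1) = 0 then q - 1 else e % (q - 1)

lemma redExp_eq_self {q : ℕ} (hq : 2 ≤ q) {e : ℕ} (he : e ≤ q - 1) : redExp q e = e := by
  unfold redExp
  rcases Nat.eq_zero_or_pos e with h | h
  · simp [h]
  · rw [if_neg h.ne']
    by_cases h2 : e % (q - 1) = 0
    · rw [if_pos h2]
      have hd : (q - 1) ∣ e := Nat.dvd_of_mod_eq_zero h2
      have := Nat.le_of_dvd h hd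
      omega
    · rw [if_neg h2, Nat.mod_eq_of_lt]
      have : e ≠ q - 1 := by
        intro hh; apply h2; rw [hh]; exact Nat.mod_self _
      omega

lemma redExp_pos {q : ℕ} (hq : 2 ≤ q) {e : ℕ} (he : 0 < e) : 0 < redExp q e := by
  unfold redExp
  rw [if_neg he.ne']
  split_ifs with h
  · omega
  · exact Nat.pos_of_ne_zero h

lemma redExp_mod {q e : ℕ} (he : 0 < e) : redExp q e % (q - 1) = e % (q - 1) := by
  unfold redExp
  rw [if_neg he.ne']
  split_ifs with h
  · rw [Nat.mod_self]; exact h.symm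
  · exact Nat.mod_mod_of_dvd e (dvd_refl (q - 1))

lemma pow_red {F : Type*} [Field F] [Fintype F] (x : F) {e : ℕ}
    (he : Fintype.card F ≤ e) : x ^ e = x ^ (e - (Fintype.card F - 1)) := by
  have hq2 : 2 ≤ Fintype.card F := Fintype.one_lt_card
  obtain ⟨e', rfl⟩ : ∃ e', e = e' + Fintype.card F := ⟨e - Fintype.card F, by omega⟩
  have h1 : e' + Fintype.card F - (Fintype.card F - 1) = e' + 1 := by omega
  rw [h1, pow_add, FiniteField.pow_card, ← pow_succ]

/-- If `d ≥ q`, `x^α ∈ M_d(a)` and `x^β ∈ M_d(b)` are distinct with `a ≥ b` and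
`x^α(1,x_1,...,x_m) ≡ x^β(1,x_1,...,x_m) mod ⟨x_i^q - x_i⟩`, then `x_0 ∣ x^α`,
`x_0 ∤ x^β`, and there is `x^{β'} ∈ M_{d-(q-1)}` with the same evaluation as `x^β`
at every standard representative of `P^m`. -/
theorem stmt_18 (F : Type*) [Field F] [Fintype F] (q m d a b : ℕ)
    (hq : q = Fintype.card F) (hm : 1 ≤ m) (hd1 : q ≤ d) (hd2 : d ≤ m * (q - 1))
    (α β : Fin (m + 1) → ℕ) (hα : Mmon q m d a α) (hβ : Mmon q m d b β)
    (hab : b ≤ a) (hne : α ≠ β)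
    (hcong : ∀ i : Fin (m + 1), i ≠ 0 → redExp q (α i) = redExp q (β i)) :
    0 < α 0 ∧ β 0 = 0 ∧
    ∃ (β' : Fin (m + 1) → ℕ) (j' : ℕ), Mmon q m (d - (q - 1)) j' β' ∧
      ∀ w ∈ stdRep F m, ∏ k, w k ^ β k = ∏ k, w k ^ β' k := by
  have hq2 : 2 ≤ q := hq ▸ Fintype.one_lt_card
  obtain ⟨ham, hsa, hpa, hza, hla⟩ := hα
  obtain ⟨hbm, hsb, hpb, hzb, hlb⟩ := hβ
  set ia : Fin (m + 1) := ⟨m - a, Nat.lt_succ_of_le (Nat.sub_le m a)⟩ with hia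
  set ib : Fin (m + 1) := ⟨m - b, Nat.lt_succ_of_le (Nat.sub_le m b)⟩ with hib
  -- generic: from agreement off one index and equal sums, conclude agreement there
  have sumEq : ∑ k, α k = ∑ k, β k := by rw [hsa, hsb]
  have sumArg : ∀ i0 : Fin (m + 1), (∀ i, i ≠ i0 → α i = β i) → α i0 = β i0 := by
    intro i0 hrest
    have h1 := Finset.add_sum_erase Finset.univ α (Finset.mem_univ i0)
    have h2 := Finset.add_sum_erase Finset.univ β (Finset.mem_univ i0)
    have h3 : ∑ k ∈ Finset.univ.erase i0, α k = ∑ k ∈ Finset.univ.erase i0, β k :=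
      Finset.sum_congr rfl fun x hx => hrest x (Finset.ne_of_mem_erase hx)
    omega
  have valpos : ∀ i : Fin (m + 1), i ≠ 0 → 0 < (i : ℕ) := by
    intro i hi
    refine Nat.pos_of_ne_zero fun h => hi (Fin.ext ?_)
    simp [h]
  -- Step 1: m - a = 0
  have hma : m - a = 0 := by
    by_contra hma
    have hle : m - a ≤ m - b := Nat.sub_le_sub_left hab m
    rcases lt_or_eq_of_le hle with hlt | heq
    · -- β vanishes at ia but α is positive there
      have hb0 : β ia = 0 := hzb ia hlt
      have hcc := hcong ia (by intro h; apply hma; simpa [hia] using congrArg Fin.val h)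
      rw [hb0] at hcc
      have hz : redExp q (0 : ℕ) = 0 := by simp [redExp]
      rw [hz] at hcc
      have : 0 < redExp q (α ia) := redExp_pos hq2 hpa
      omega
    · -- m - a = m - b : show α = β, contradiction
      have hIab : ia = ib := Fin.ext (by simp [hia, hib, heq])
      have hrest : ∀ i, i ≠ ia → α i = β i := by
        intro i hi
        have hiv : (i : ℕ) ≠ m - a := fun h => hi (Fin.ext (by simp [hia, h]))
        by_cases hi0 : i = 0
        · subst hi0
          have h0a : (0 : ℕ) < m - a := Nat.pos_of_ne_zero hma
          rw [hza 0 (by simpa using h0a), hzb 0 (by simp; omega)]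
        · have hαle : α i ≤ q - 1 := by
            rcases lt_trichotomy (i : ℕ) (m - a) with h | h | h
            · rw [hza i h]; omega
            · exact absurd h hiv
            · exact hla i h
          have hβle : β i ≤ q - 1 := by
            rcases lt_trichotomy (i : ℕ) (m - b) with h | h | h
            · rw [hzb i h]; omega
            · exact absurd (heq ▸ h.symm).symm hiv
            · exact hlb i h
          have := hcong i hi0
          rwa [redExp_eq_self hq2 hαle, redExp_eq_self hq2 hβle] at this
      exact hne (funext fun i => by
        by_cases hi : i = ia
        · rw [hi]; exact sumArg ia hrest
        · exact hrest i hi)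
  -- the special index of α is 0
  have hia0 : ia = 0 := Fin.ext (by simp [hia, hma])
  have hα0 : 0 < α 0 := hia0 ▸ hpa
  -- Step 2: 0 < m - b
  have hmb : 0 < m - b := by
    by_contra hmb
    have hmb0 : m - b = 0 := by omega
    have hib0 : ib = 0 := Fin.ext (by simp [hib, hmb0])
    have hrest : ∀ i, i ≠ (0 : Fin (m + 1)) → α i = β i := by
      intro i hi
      have hiv : 0 < (i : ℕ) := valpos i hi
      have hαle : α i ≤ q - 1 := hla i (by omega)
      have hβle : β i ≤ q - 1 := hlb i (by omega)
      have := hcong i hi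
      rwa [redExp_eq_self hq2 hαle, redExp_eq_self hq2 hβle] at this
    exact hne (funext fun i => by
      by_cases hi : i = 0
      · rw [hi]; exact sumArg 0 hrest
      · exact hrest i hi)
  have hβ0 : β 0 = 0 := hzb 0 (by simpa using hmb)
  have hibne0 : ib ≠ 0 := by
    intro h
    have := congrArg Fin.val h
    simp [hib] at this
    omega
  -- agreement away from 0 and ib
  have hrest2 : ∀ i : Fin (m + 1), i ≠ 0 → i ≠ ib → α i = β i := by
    intro i hi0 hiib
    have hiv : 0 < (i : ℕ) := valpos i hi0
    have hαle : α i ≤ q - 1 := hla i (by omega)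
    have hβle : β i ≤ q - 1 := by
      rcases lt_trichotomy (i : ℕ) (m - b) with h | h | h
      · rw [hzb i h]; omega
      · exact absurd (Fin.ext (by simp [hib, h])) hiib
      · exact hlb i h
    have := hcong i hi0
    rwa [redExp_eq_self hq2 hαle, redExp_eq_self hq2 hβle] at this
  -- key equation: β ib = α 0 + α ib
  have hkey : β ib = α 0 + α ib := by
    have hmem : ib ∈ Finset.univ.erase (0 : Fin (m + 1)) :=
      Finset.mem_erase.mpr ⟨hibne0, Finset.mem_univ _⟩
    have h1 := Finset.add_sum_erase Finset.univ α (Finset.mem_univ (0 : Fin (m + 1)))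
    have h2 := Finset.add_sum_erase (Finset.univ.erase (0 : Fin (m + 1))) α hmem
    have h3 := Finset.add_sum_erase Finset.univ β (Finset.mem_univ (0 : Fin (m + 1)))
    have h4 := Finset.add_sum_erase (Finset.univ.erase (0 : Fin (m + 1))) β hmem
    have h5 : ∑ k ∈ (Finset.univ.erase (0 : Fin (m + 1))).erase ib, α k
        = ∑ k ∈ (Finset.univ.erase (0 : Fin (m + 1))).erase ib, β k := by
      refine Finset.sum_congr rfl fun x hx => ?_
      have hx1 := Finset.ne_of_mem_erase hx
      have hx2 := Finset.ne_of_mem_erase (Finset.mem_of_mem_erase hx)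
      exact hrest2 x hx2 hx1
    omega
  have hβib : 0 < β ib := by omega
  have hαib : 0 < α ib := by
    have h1 : 0 < redExp q (β ib) := redExp_pos hq2 hβib
    have h2 := hcong ib hibne0
    by_contra h
    have : α ib = 0 := by omega
    rw [this] at h2
    have hz : redExp q (0 : ℕ) = 0 := by simp [redExp]
    rw [hz] at h2
    omega
  have hαible : α ib ≤ q - 1 := hla ib (by simp [hib]; omega)
  -- congruence mod q-1
  have hmodeq : α ib % (q - 1) = β ib % (q - 1) := by
    have h1 := redExp_mod (q := q) hαib
    have h2 := redExp_mod (q := q) hβib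
    rw [hcong ib hibne0] at h1
    omega
  have hdvd : (q - 1) ∣ β ib - α ib :=
    (Nat.modEq_iff_dvd' (by omega : α ib ≤ β ib)).mp hmodeq
  obtain ⟨c, hc⟩ := hdvd
  have hcpos : 0 < c := by
    rcases Nat.eq_zero_or_pos c with h | h
    · rw [h, Nat.mul_zero] at hc; omega
    · exact h
  have hge : α ib + (q - 1) ≤ β ib := by
    have := Nat.le_mul_of_pos_right (q - 1) hcpos
    omega
  have hibq : q ≤ β ib := by omega
  refine ⟨hα0, hβ0, Function.update β ib (β ib - (q - 1)), b, ⟨hbm, ?_, ?_, ?_, ?_⟩, ?_⟩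
  · -- sum
    have h1 := Finset.sum_update_of_mem (Finset.mem_univ ib) (f := β) (b := β ib - (q - 1))
    rw [← Finset.erase_eq] at h1
    have h2 := Finset.add_sum_erase Finset.univ β (Finset.mem_univ ib)
    omega
  · -- positivity at ib
    show 0 < Function.update β ib (β ib - (q - 1)) ib
    rw [Function.update_self]
    omega
  · -- zero below
    intro k hk
    have hkib : k ≠ ib := fun h => by rw [h] at hk; simp [hib] at hk
    rw [Function.update_of_ne hkib]
    exact hzb k hk
  · -- bounded above
    intro k hk
    have hkib : k ≠ ib := fun h => by rw [h] at hk; simp [hib] at hk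
    rw [Function.update_of_ne hkib]
    exact hlb k hk
  · -- evaluation
    intro w _
    refine Finset.prod_congr rfl fun k _ => ?_
    by_cases hk : k = ib
    · subst hk
      rw [Function.update_self]
      have h := pow_red (w ib) (hq ▸ hibq)
      rw [← hq] at h
      exact h
    · rw [Function.update_of_ne hk]
end
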